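/- If at least (k-1)^2 + 1 edges of a matching all cross a fixed edge e on the same side (say, all have their left endpoint to the left of the left endpoint of e and their right endpoint strictly between the endpoints of e), then the matching contains an interleaving with k edges or a nesting with k edges all broken by e (i.e., a broken nesting with k+1 edges including e). -/

import Mathlib

/-- Two edges `e = {e.1, e.2}` and `f = {f.1, f.2}` (each written with smaller
endpoint first) cross. -/
def Crosses (e f : ℕ × ℕ) : Prop :=
  (e.1 < f.1 ∧ f.1 < e.2 ∧ e.2 < f.2) ∨ (f.1 < e.1 ∧ e.1 < f.2 ∧ f.2 < e.2)

/-- `E` is (the edge set of) a complete matching on `[2n] = {1,…,2n}`: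
every edge is written `(a,b)` with `a < b`, and every vertex is covered
by exactly one edge. -/
def IsMatching (n : ℕ) (E : Finset (ℕ × ℕ)) : Prop :=
  (∀ e ∈ E, 1 ≤ e.1 ∧ e.1 < e.2 ∧ e.2 ≤ 2 * n) ∧
  (∀ v ∈ Finset.Icc 1 (2 * n), ∃! e, e ∈ E ∧ (v = e.1 ∨ v = e.2))

/-- The segment `[i,j]` is an interval of the matching `E`: no edge has one
endpoint inside and one outside. -/
def IsInterval (E : Finset (ℕ × ℕ)) (i j : ℕ) : Prop :=
  ∀ e ∈ E, (i ≤ e.1 ∧ e.1 ≤ j) ↔ (i ≤ e.2 ∧ e.2 ≤ j)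

/-- A matching on `[2n]` is indecomposable when its only nonempty interval is
all of `[1, 2n]`. -/
def Indecomposable (n : ℕ) (E : Finset (ℕ × ℕ)) : Prop :=
  ∀ i j : ℕ, 1 ≤ i → i ≤ j → j ≤ 2 * n → IsInterval E i j → i = 1 ∧ j = 2 * n

/-- `v` is in the shadow of the (nonempty) list of edges `L`, i.e. in the
smallest contiguous segment containing all endpoints of edges of `L`. -/
def InShadow (L : List (ℕ × ℕ)) (v : ℕ) : Prop :=
  (∃ a ∈ L, a.1 ≤ v) ∧ (∃ b ∈ L, v ≤ b.2)

/-- The edge `e` splits the shadow of the edges in `L`: exactly one of its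
endpoints lies in the shadow. -/
def SplitsL (e : ℕ × ℕ) (L : List (ℕ × ℕ)) : Prop :=
  Xor' (InShadow L e.1) (InShadow L e.2)

/-- `L` is a pin sequence: each edge after the first splits the shadow of the
preceding ones. -/
def IsPinSeq (L : List (ℕ × ℕ)) : Prop :=
  ∀ i (h : i < L.length), 0 < i → SplitsL (L.get ⟨i, h⟩) (L.take i)

/-- A proper pin sequence: additionally, `p_{i+1}` does not split the shadow of
`p_1, …, p_{i-1}`. -/
def IsProperPinSeq (L : List (ℕ × ℕ)) : Prop :=
  IsPinSeq L ∧ ∀ i (h : i < L.length), 2 ≤ i → ¬ SplitsL (L.get ⟨i, h⟩) (L.take (i - 1))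

/-- The interleaving with `k` edges: the matching on `[2k]` with edges `i ~ i+k`. -/
def Interleaving (k : ℕ) : Finset (ℕ × ℕ) :=
  (Finset.Icc 1 k).image fun i => (i, i + k)

/-- The right-broken nesting with `k` edges: `k ~ 2k` and `i ~ 2k - i` for `i ∈ [k-1]`. -/
def RightBrokenNesting (k : ℕ) : Finset (ℕ × ℕ) :=
  insert (k, 2 * k) ((Finset.Icc 1 (k - 1)).image fun i => (i, 2 * k - i))

/-- The left-broken nesting with `k` edges: `1 ~ k+1` and `i+1 ~ 2k - i + 1` for `i ∈ [k-1]`. -/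
def LeftBrokenNesting (k : ℕ) : Finset (ℕ × ℕ) :=
  insert (1, k + 1) ((Finset.Icc 1 (k - 1)).image fun i => (i + 1, 2 * k - i + 1))

/-- The matching `E` contains the pattern matching `F` (deleting edges and
order-isomorphic relabeling). -/
def Contains (E F : Finset (ℕ × ℕ)) : Prop :=
  ∃ φ : ℕ → ℕ, StrictMono φ ∧ ∀ f ∈ F, (φ f.1, φ f.2) ∈ E

/-- `v` is in the shadow of the finite set of edges `S`. -/
def InShadowF (S : Finset (ℕ × ℕ)) (v : ℕ) : Prop :=
  (∃ a ∈ S, a.1 ≤ v) ∧ (∃ b ∈ S, v ≤ b.2)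


section ESAux

variable {α : Type*} [LinearOrder α]

open Function Finset

/-- **Erdős–Szekeres Theorem** (copied from the Mathlib archive). -/
theorem my_erdos_szekeres {r s n : ℕ} {f : Fin n → α} (hn : r * s < n) (hf : Injective f) :
    (∃ t : Finset (Fin n), r < t.card ∧ StrictMonoOn f ↑t) ∨
      ∃ t : Finset (Fin n), s < t.card ∧ StrictAntiOn f ↑t := by
  let inc_sequences_ending_in : Fin n → Finset (Finset (Fin n)) := fun i =>
    univ.powerset.filter fun t => Finset.max t = i ∧ StrictMonoOn f ↑t
  let dec_sequences_ending_in : Fin n → Finset (Finset (Fin n)) := fun i =>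
    univ.powerset.filter fun t => Finset.max t = i ∧ StrictAntiOn f ↑t
  have inc_i : ∀ i, {i} ∈ inc_sequences_ending_in i := fun i => by
    simp [inc_sequences_ending_in, StrictMonoOn]
  have dec_i : ∀ i, {i} ∈ dec_sequences_ending_in i := fun i => by
    simp [dec_sequences_ending_in, StrictAntiOn]
  let ab' : Fin n → ℕ × ℕ := by
    intro i
    apply
      (max' ((inc_sequences_ending_in i).image card) (Nonempty.image ⟨{i}, inc_i i⟩ _),
        max' ((dec_sequences_ending_in i).image card) (Nonempty.image ⟨{i}, dec_i i⟩ _))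
  generalize hab : ab' = ab
  rsuffices ⟨i, hi⟩ : ∃ i, r < (ab i).1 ∨ s < (ab i).2
  · refine Or.imp ?_ ?_ hi
    on_goal 1 =>
      have : (ab i).1 ∈ image card (inc_sequences_ending_in i) := by
        simp only [← hab]; exact max'_mem _ (Nonempty.image ⟨{i}, inc_i i⟩ _)
    on_goal 2 =>
      have : (ab i).2 ∈ image card (dec_sequences_ending_in i) := by
        simp only [← hab]; exact max'_mem _ (Nonempty.image ⟨{i}, dec_i i⟩ _)
    all_goals
      intro hi
      rw [mem_image] at this
      obtain ⟨t, ht₁, ht₂⟩ := this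
      refine ⟨t, by rwa [ht₂], ?_⟩
      rw [mem_filter] at ht₁
      apply ht₁.2.2
  have : Injective ab := by
    simp only [← hab]
    apply Function.Injective.of_lt_imp_ne
    intro i j k q
    injection q with q₁ q₂
    cases lt_or_gt_of_ne fun _ => ne_of_lt ‹i < j› (hf ‹f i = f j›)
    on_goal 1 =>
      apply ne_of_lt _ q₁
      have : (ab' i).1 ∈ image card (inc_sequences_ending_in i) := by exact max'_mem _ (Nonempty.image ⟨{i}, inc_i i⟩ _)
    on_goal 2 =>
      apply ne_of_lt _ q₂
      have : (ab' i).2 ∈ image card (dec_sequences_ending_in i) := by exact max'_mem _ (Nonempty.image ⟨{i}, dec_i i⟩ _)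
    all_goals
      rw [Nat.lt_iff_add_one_le]
      apply le_max'
      rw [mem_image] at this ⊢
      rcases this with ⟨t, ht₁, ht₂⟩
      rw [mem_filter] at ht₁
      have : t.max = i := by simp only [ht₁.2.1]
      refine ⟨insert j t, ?_, ?_⟩
      · rw [mem_filter]
        refine ⟨?_, ?_, ?_⟩
        · rw [mem_powerset]; apply subset_univ
        · convert max_insert (a := j) (s := t)
          rw [ht₁.2.1, max_eq_left]
          apply WithBot.coe_le_coe.mpr (le_of_lt ‹i < j›)
        simp only [StrictMonoOn, StrictAntiOn, coe_insert, Set.mem_insert_iff, mem_coe]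
        rintro x ⟨rfl | _⟩ y ⟨rfl | _⟩ _
        · apply (irrefl _ ‹j < j›).elim
        · exfalso
          apply not_le_of_gt (_root_.trans ‹i < j› ‹j < y›) (le_max_of_eq ‹y ∈ t› ‹t.max = i›)
        · first
          | apply lt_of_le_of_lt _ ‹f i < f j›
          | apply lt_of_lt_of_le ‹f j < f i› _
          rcases lt_or_eq_of_le (le_max_of_eq ‹x ∈ t› ‹t.max = i›) with (_ | rfl)
          · apply le_of_lt (ht₁.2.2 ‹x ∈ t› (mem_of_max ‹t.max = i›) ‹x < i›)
          · rfl
        · apply ht₁.2.2 ‹x ∈ t› ‹y ∈ t› ‹x < y›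
      · rw [card_insert_of_notMem, ht₂]
        intro
        apply not_le_of_gt ‹i < j› (le_max_of_eq ‹j ∈ t› ‹t.max = i›)
  by_contra! q
  let ran : Finset (ℕ × ℕ) := (range r).image Nat.succ ×ˢ (range s).image Nat.succ
  have : image ab univ ⊆ ran := by
    rintro ⟨x₁, x₂⟩
    simp only [ran, mem_image, exists_prop, mem_range, mem_univ, mem_product, true_and,
      Prod.ext_iff]
    rintro ⟨i, rfl, rfl⟩
    specialize q i
    have z : 1 ≤ (ab i).1 ∧ 1 ≤ (ab i).2 := by
      simp only [← hab]
      constructor <;>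
        · apply le_max'
          rw [mem_image]
          exact ⟨{i}, by solve_by_elim, card_singleton i⟩
    exact ⟨⟨(ab i).1 - 1, by omega⟩, (ab i).2 - 1, by omega⟩
  apply not_le_of_gt hn
  simpa [ran, Nat.succ_injective, card_image_of_injective, ‹Injective ab›] using
    card_le_card this

/-- Glue a finite strictly increasing pattern `g 0 < g 1 < ⋯ < g (m-1)` (with `g 0 ≥ 1`)
into a strictly monotone function on all of `ℕ`, hitting `g (x-1)` at `x ∈ [1, m]`. -/
def glueFun (g : ℕ → ℕ) (m : ℕ) : ℕ → ℕ :=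
  fun x => if x = 0 then 0 else if x ≤ m then g (x - 1) else g (m - 1) + (x - m)

theorem glueFun_strictMono {g : ℕ → ℕ} {m : ℕ} (hm : 1 ≤ m) (h0 : 1 ≤ g 0)
    (hg : ∀ a b, a < b → b < m → g a < g b) : StrictMono (glueFun g m) := by
  apply strictMono_nat_of_lt_succ
  intro x
  unfold glueFun
  rcases Nat.eq_zero_or_pos x with rfl | hx
  · rw [if_pos rfl, if_neg (by omega), if_pos (by omega)]
    simpa using (show 0 < g 0 from h0)
  · rw [if_neg (show ¬ x = 0 by omega), if_neg (show ¬ x + 1 = 0 by omega)]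
    by_cases h2 : x + 1 ≤ m
    · rw [if_pos (show x ≤ m by omega), if_pos h2]
      exact hg (x - 1) (x + 1 - 1) (by omega) (by omega)
    · rw [if_neg h2]
      by_cases h3 : x ≤ m
      · rw [if_pos h3]
        have hx2 : x = m := by omega
        subst hx2
        omega
      · rw [if_neg h3]
        omega

theorem glueFun_eval {g : ℕ → ℕ} {m x : ℕ} (h1 : 1 ≤ x) (h2 : x ≤ m) :
    glueFun g m x = g (x - 1) := by
  unfold glueFun
  rw [if_neg (by omega), if_pos h2]

end ESAux

theorem stmt2 (n k : ℕ) (E : Finset (ℕ × ℕ)) (hM : IsMatching n E)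
    (e : ℕ × ℕ) (he : e ∈ E) (S : Finset (ℕ × ℕ)) (hS : S ⊆ E)
    (hcard : (k - 1) ^ 2 + 1 ≤ S.card)
    (hcross : ∀ f ∈ S, f.1 < e.1 ∧ e.1 < f.2 ∧ f.2 < e.2) :
    Contains E (Interleaving k) ∨
      ∃ φ : ℕ → ℕ, StrictMono φ ∧ (∀ f ∈ RightBrokenNesting (k + 1), (φ f.1, φ f.2) ∈ E) ∧
        φ (k + 1) = e.1 ∧ φ (2 * (k + 1)) = e.2 := by
  classical
  rcases Nat.eq_zero_or_pos k with rfl | hk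
  · left
    refine ⟨id, strictMono_id, ?_⟩
    intro f hf
    simp only [Interleaving, Finset.mem_image, Finset.mem_Icc] at hf
    obtain ⟨i, ⟨h1, h2⟩, _⟩ := hf
    omega
  have hee := hM.1 e he
  -- injectivity of endpoints
  have hfst : ∀ f ∈ E, ∀ g ∈ E, f.1 = g.1 → f = g := by
    intro f hf g hg h
    obtain ⟨ha, hb, hc⟩ := hM.1 f hf
    have hv : f.1 ∈ Finset.Icc 1 (2 * n) := by rw [Finset.mem_Icc]; omega
    exact (hM.2 f.1 hv).unique ⟨hf, Or.inl rfl⟩ ⟨hg, Or.inl h⟩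
  have hsnd : ∀ f ∈ E, ∀ g ∈ E, f.2 = g.2 → f = g := by
    intro f hf g hg h
    obtain ⟨ha, hb, hc⟩ := hM.1 f hf
    have hv : f.2 ∈ Finset.Icc 1 (2 * n) := by rw [Finset.mem_Icc]; omega
    exact (hM.2 f.2 hv).unique ⟨hf, Or.inr rfl⟩ ⟨hg, Or.inr h⟩
  set N := S.card with hNdef
  have hinjOn : Set.InjOn Prod.fst ↑S := fun f hf g hg h =>
    hfst f (hS hf) g (hS hg) h
  have hMcard : (S.image Prod.fst).card = N := Finset.card_image_of_injOn hinjOn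
  let σ := (S.image Prod.fst).orderIsoOfFin hMcard
  have hexu : ∀ i : Fin N, ∃! p, p ∈ S ∧ p.1 = (σ i : ℕ) := by
    intro i
    have hmem : (σ i : ℕ) ∈ S.image Prod.fst := (σ i).2
    rw [Finset.mem_image] at hmem
    obtain ⟨p, hp, hp1⟩ := hmem
    refine ⟨p, ⟨hp, hp1⟩, ?_⟩
    rintro q ⟨hq, hq1⟩
    exact hfst q (hS hq) p (hS hp) (hq1.trans hp1.symm)
  let ε : Fin N → ℕ × ℕ := fun i => Finset.choose _ S (hexu i)
  have hεS : ∀ i, ε i ∈ S := fun i => Finset.choose_mem _ S (hexu i)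
  have hε1 : ∀ i, (ε i).1 = (σ i : ℕ) := fun i => Finset.choose_property _ S (hexu i)
  have hε1mono : ∀ i j : Fin N, i < j → (ε i).1 < (ε j).1 := by
    intro i j h
    rw [hε1, hε1]
    exact Subtype.coe_lt_coe.mpr (σ.strictMono h)
  have hε2inj : Function.Injective fun i : Fin N => (ε i).2 := by
    intro i j h
    have hij : ε i = ε j := hsnd _ (hS (hεS i)) _ (hS (hεS j)) h
    have hcoe : (σ i : ℕ) = (σ j : ℕ) := by rw [← hε1, ← hε1, hij]
    exact σ.injective (Subtype.ext hcoe)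
  have hlt : (k - 1) * (k - 1) < N := by
    rw [pow_two] at hcard; omega
  rcases my_erdos_szekeres hlt hε2inj with ⟨t, htc, hmono⟩ | ⟨t, htc, hanti⟩
  -- Case 1: k pairwise crossing edges → interleaving
  · have htk : k ≤ t.card := by omega
    let τ := t.orderIsoOfFin rfl
    let idx : ℕ → Fin t.card := fun j =>
      ⟨min j (k - 1), Nat.lt_of_le_of_lt (Nat.min_le_right _ _) htc⟩
    let u : ℕ → ℕ × ℕ := fun j => ε (τ (idx j) : Fin N)
    have hidx : ∀ a b : ℕ, a < b → b ≤ k - 1 → idx a < idx b := by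
      intro a b hab hbk
      simp only [idx, Fin.lt_def]
      omega
    have humem : ∀ j, u j ∈ S := fun j => hεS _
    have ucross : ∀ j, (u j).1 < e.1 ∧ e.1 < (u j).2 ∧ (u j).2 < e.2 :=
      fun j => hcross _ (humem j)
    have upos : ∀ j, 1 ≤ (u j).1 := fun j => (hM.1 _ (hS (humem j))).1
    have hu1 : ∀ a b : ℕ, a < b → b ≤ k - 1 → (u a).1 < (u b).1 := by
      intro a b hab hbk
      exact hε1mono _ _ (Subtype.coe_lt_coe.mpr (τ.strictMono (hidx a b hab hbk)))
    have hu2 : ∀ a b : ℕ, a < b → b ≤ k - 1 → (u a).2 < (u b).2 := by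
      intro a b hab hbk
      exact hmono (Finset.mem_coe.mpr (τ (idx a)).2) (Finset.mem_coe.mpr (τ (idx b)).2)
        (Subtype.coe_lt_coe.mpr (τ.strictMono (hidx a b hab hbk)))
    left
    refine ⟨glueFun (fun x => if x < k then (u x).1 else (u (x - k)).2) (2 * k),
      glueFun_strictMono (by omega) ?_ ?_, ?_⟩
    · show 1 ≤ if 0 < k then (u 0).1 else (u (0 - k)).2
      rw [if_pos hk]
      exact upos 0
    · intro a b hab hbk
      split_ifs with h1 h2 h2
      · exact hu1 a b hab (by omega)
      · exact lt_trans (ucross a).1 (ucross (b - k)).2.1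
      · omega
      · exact hu2 (a - k) (b - k) (by omega) (by omega)
    · intro f hf
      simp only [Interleaving, Finset.mem_image, Finset.mem_Icc] at hf
      obtain ⟨i, ⟨h1i, h2i⟩, rfl⟩ := hf
      dsimp only
      rw [glueFun_eval (show 1 ≤ i by omega) (show i ≤ 2 * k by omega),
        glueFun_eval (show 1 ≤ i + k by omega) (show i + k ≤ 2 * k by omega)]
      rw [if_pos (show i - 1 < k by omega), if_neg (show ¬ i + k - 1 < k by omega)]
      have hidx2 : i + k - 1 - k = i - 1 := by omega
      rw [hidx2, Prod.mk.eta]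
      exact hS (humem _)
  -- Case 2: k pairwise nested edges → broken nesting with e
  · have htk : k ≤ t.card := by omega
    let τ := t.orderIsoOfFin rfl
    let idx : ℕ → Fin t.card := fun j =>
      ⟨min j (k - 1), Nat.lt_of_le_of_lt (Nat.min_le_right _ _) htc⟩
    let u : ℕ → ℕ × ℕ := fun j => ε (τ (idx j) : Fin N)
    have hidx : ∀ a b : ℕ, a < b → b ≤ k - 1 → idx a < idx b := by
      intro a b hab hbk
      simp only [idx, Fin.lt_def]
      omega
    have humem : ∀ j, u j ∈ S := fun j => hεS _
    have ucross : ∀ j, (u j).1 < e.1 ∧ e.1 < (u j).2 ∧ (u j).2 < e.2 :=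
      fun j => hcross _ (humem j)
    have upos : ∀ j, 1 ≤ (u j).1 := fun j => (hM.1 _ (hS (humem j))).1
    have hu1 : ∀ a b : ℕ, a < b → b ≤ k - 1 → (u a).1 < (u b).1 := by
      intro a b hab hbk
      exact hε1mono _ _ (Subtype.coe_lt_coe.mpr (τ.strictMono (hidx a b hab hbk)))
    have hu2 : ∀ a b : ℕ, a < b → b ≤ k - 1 → (u b).2 < (u a).2 := by
      intro a b hab hbk
      exact hanti (Finset.mem_coe.mpr (τ (idx a)).2) (Finset.mem_coe.mpr (τ (idx b)).2)
        (Subtype.coe_lt_coe.mpr (τ.strictMono (hidx a b hab hbk)))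
    right
    refine ⟨glueFun (fun x => if x < k then (u x).1 else if x = k then e.1
        else if x < 2 * k + 1 then (u (2 * k - x)).2 else e.2) (2 * (k + 1)),
      glueFun_strictMono (by omega) ?_ ?_, ?_, ?_, ?_⟩
    · show 1 ≤ if 0 < k then (u 0).1 else _
      rw [if_pos hk]
      exact upos 0
    · intro a b hab hbk
      split_ifs <;>
      first
        | omega
        | exact hu1 a b hab (by omega)
        | exact (ucross a).1
        | exact lt_trans (ucross a).1 (ucross _).2.1
        | exact lt_trans (ucross a).1 (show e.1 < e.2 by omega)
        | exact (ucross _).2.1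
        | exact hu2 (2 * k - b) (2 * k - a) (by omega) (by omega)
        | exact (ucross _).2.2
    · intro f hf
      simp only [RightBrokenNesting, Finset.mem_insert, Finset.mem_image, Finset.mem_Icc] at hf
      rcases hf with rfl | ⟨i, ⟨h1i, h2i⟩, rfl⟩
      · dsimp only
        rw [glueFun_eval (show 1 ≤ k + 1 by omega) (show k + 1 ≤ 2 * (k + 1) by omega),
          glueFun_eval (show 1 ≤ 2 * (k + 1) by omega) (le_refl _)]
        rw [if_neg (show ¬ k + 1 - 1 < k by omega), if_pos (show k + 1 - 1 = k by omega),
          if_neg (show ¬ 2 * (k + 1) - 1 < k by omega),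
          if_neg (show ¬ 2 * (k + 1) - 1 = k by omega),
          if_neg (show ¬ 2 * (k + 1) - 1 < 2 * k + 1 by omega)]
        rw [Prod.mk.eta]
        exact he
      · have h2i' : i ≤ k := by omega
        dsimp only
        rw [glueFun_eval (show 1 ≤ i by omega) (show i ≤ 2 * (k + 1) by omega),
          glueFun_eval (show 1 ≤ 2 * (k + 1) - i by omega)
            (show 2 * (k + 1) - i ≤ 2 * (k + 1) by omega)]
        rw [if_pos (show i - 1 < k by omega),
          if_neg (show ¬ 2 * (k + 1) - i - 1 < k by omega),
          if_neg (show ¬ 2 * (k + 1) - i - 1 = k by omega),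
          if_pos (show 2 * (k + 1) - i - 1 < 2 * k + 1 by omega)]
        have hidx2 : 2 * k - (2 * (k + 1) - i - 1) = i - 1 := by omega
        rw [hidx2, Prod.mk.eta]
        exact hS (humem _)
    · rw [glueFun_eval (show 1 ≤ k + 1 by omega) (show k + 1 ≤ 2 * (k + 1) by omega)]
      rw [if_neg (show ¬ k + 1 - 1 < k by omega), if_pos (show k + 1 - 1 = k by omega)]
    · rw [glueFun_eval (show 1 ≤ 2 * (k + 1) by omega) (le_refl _)]
      rw [if_neg (show ¬ 2 * (k + 1) - 1 < k by omega),
        if_neg (show ¬ 2 * (k + 1) - 1 = k by omega),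
        if_neg (show ¬ 2 * (k + 1) - 1 < 2 * k + 1 by omega)]
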